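/- Let k ≥ 1 and π ∈ (0,1). For the process T(k,π) with uniform initial distribution, the m-order conditional Shannon entropy h_m equals 1 (bit per letter) for every m with 1 ≤ m ≤ k; in particular the k-order Shannon entropy h_k equals 1. The same holds for T̄(k,π). -/
import Mathlib


mutual
/-- `tf0 π u` is the conditional probability `t_{k,π}(0|u)` for the two-faced
process `T(k,π)`, where `k = u.length ≥ 1` (bits: `false = 0`, `true = 1`,
words written with the most recent conditioning bit last, so `0u` is `false :: u`). -/
noncomputable def tf0 (π : ℝ) : List Bool → ℝ
  | [] => 1 / 2
  | [false] => π
  | [true] => 1 - π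
  | false :: b :: u => tf0 π (b :: u)
  | true :: b :: u => tb0 π (b :: u)

/-- `tb0 π u` is `t̄_{k,π}(0|u)` for the process `T̄(k,π)`. -/
noncomputable def tb0 (π : ℝ) : List Bool → ℝ
  | [] => 1 / 2
  | [false] => 1 - π
  | [true] => π
  | false :: b :: u => tb0 π (b :: u)
  | true :: b :: u => tf0 π (b :: u)
end

/-- `tface π w u = t_{k,π}(w|u)`, using `t(1|u) = 1 - t(0|u)`. -/
noncomputable def tface (π : ℝ) (w : Bool) (u : List Bool) : ℝ :=
  if w then 1 - tf0 π u else tf0 π u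

/-- `tbarface π w u = t̄_{k,π}(w|u)`. -/
noncomputable def tbarface (π : ℝ) (w : Bool) (u : List Bool) : ℝ :=
  if w then 1 - tb0 π u else tb0 π u

/-- XOR of the bits of a binary word. -/
def xorWord (u : List Bool) : Bool := u.foldl xor false

/-- `pfull κ k u` is the probability that the process with transition kernel
`κ = t_{k,π}` (or `t̄_{k,π}`) and uniform initial distribution starts with the word `u`,
for `|u| ≥ k`: `p(u) = 2^{-k} · ∏_{i=k+1}^{|u|} κ(u_i | u_{i-k}…u_{i-1})`. -/
noncomputable def pfull (κ : Bool → List Bool → ℝ) (k : ℕ) (u : List Bool) : ℝ :=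
  ((2 : ℝ) ^ k)⁻¹ *
    ∏ j ∈ Finset.Ico k u.length, κ (u.getD j false) ((u.drop (j - k)).take k)

/-- `pword κ k u` is the probability of starting with the word `u`: for `|u| ≥ k` it is
`pfull κ k u`, and for `|u| < k` it is `Σ_{w ∈ {0,1}^{k-|u|}} p(uw)` (each word `uw` has
length exactly `k`, so `p(uw) = pfull κ k (uw)`). -/
noncomputable def pword (κ : Bool → List Bool → ℝ) (k : ℕ) (u : List Bool) : ℝ :=
  if k ≤ u.length then pfull κ k u
  else ∑ w : Fin (k - u.length) → Bool, pfull κ k (u ++ List.ofFn w)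

/-- The `m`-order conditional Shannon entropy
`h_m = -Σ_{u ∈ {0,1}^{m-1}} p(u) Σ_{v ∈ {0,1}} (p(uv)/p(u)) log₂ (p(uv)/p(u))`. -/
noncomputable def condEntropy (κ : Bool → List Bool → ℝ) (k m : ℕ) : ℝ :=
  - ∑ u : Fin (m - 1) → Bool,
      pword κ k (List.ofFn u) *
        ∑ v : Bool,
          (pword κ k (List.ofFn u ++ [v]) / pword κ k (List.ofFn u)) *
            Real.logb 2 (pword κ k (List.ofFn u ++ [v]) / pword κ k (List.ofFn u))

lemma pfull_len_eq (κ : Bool → List Bool → ℝ) (k : ℕ) (u : List Bool)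
    (h : u.length = k) : pfull κ k u = ((2 : ℝ) ^ k)⁻¹ := by
  simp [pfull, h]

lemma pword_eq (κ : Bool → List Bool → ℝ) (k : ℕ) (u : List Bool)
    (h : u.length ≤ k) : pword κ k u = ((2 : ℝ) ^ u.length)⁻¹ := by
  unfold pword
  rcases eq_or_lt_of_le h with heq | hlt
  · rw [if_pos heq.ge, pfull_len_eq κ k u heq, heq]
  · rw [if_neg (by omega)]
    have key : ∀ w : Fin (k - u.length) → Bool,
        pfull κ k (u ++ List.ofFn w) = ((2 : ℝ) ^ k)⁻¹ := fun w =>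
      pfull_len_eq _ _ _ (by simp [List.length_append]; omega)
    rw [Finset.sum_congr rfl (fun w _ => key w), Finset.sum_const, Finset.card_univ]
    have hcard : Fintype.card (Fin (k - u.length) → Bool) = 2 ^ (k - u.length) := by
      simp
    rw [hcard, nsmul_eq_mul]
    have h2 : (2 : ℝ) ^ k = 2 ^ u.length * 2 ^ (k - u.length) := by
      rw [← pow_add]; congr 1; omega
    push_cast
    rw [h2, mul_inv]
    field_simp

/-- for the process `T(k,π)` (or `T̄(k,π)`) with uniform initial
distribution, the `m`-order conditional Shannon entropy `h_m` equals `1` for every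
`1 ≤ m ≤ k`; in particular `h_k = 1`. -/
theorem two_faced_entropy_low_order (k : ℕ) (hk : 1 ≤ k) (π : ℝ)
    (hπ : π ∈ Set.Ioo (0 : ℝ) 1)
    (κ : Bool → List Bool → ℝ) (hκ : κ = tface π ∨ κ = tbarface π) :
    ∀ m : ℕ, 1 ≤ m → m ≤ k → condEntropy κ k m = 1 := by
  intro m h1 hm
  unfold condEntropy
  have hterm : ∀ u : Fin (m - 1) → Bool,
      pword κ k (List.ofFn u) *
        ∑ v : Bool,
          (pword κ k (List.ofFn u ++ [v]) / pword κ k (List.ofFn u)) *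
            Real.logb 2 (pword κ k (List.ofFn u ++ [v]) / pword κ k (List.ofFn u))
      = ((2 : ℝ) ^ (m - 1))⁻¹ * (-1) := by
    intro u
    have hu : pword κ k (List.ofFn u) = ((2 : ℝ) ^ (m - 1))⁻¹ := by
      rw [pword_eq κ k _ (by simp; omega)]; simp
    have huv : ∀ v : Bool, pword κ k (List.ofFn u ++ [v]) = ((2 : ℝ) ^ m)⁻¹ := by
      intro v
      rw [pword_eq κ k _ (by simp [List.length_append]; omega)]
      congr 2
      simp [List.length_append]
      omega
    have hratio : ∀ v : Bool,
        pword κ k (List.ofFn u ++ [v]) / pword κ k (List.ofFn u) = 1 / 2 := by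
      intro v
      rw [hu, huv v]
      have : (2 : ℝ) ^ m = 2 ^ (m - 1) * 2 := by
        rw [mul_comm, ← pow_succ']; congr 1; omega
      rw [this, mul_inv]
      field_simp
    have hlog : Real.logb 2 (1 / 2 : ℝ) = -1 := by
      rw [one_div, Real.logb_inv, Real.logb_self_eq_one] <;> norm_num
    rw [Fintype.sum_bool, hratio, hratio, hlog, hu]
    norm_num
  rw [Finset.sum_congr rfl (fun u _ => hterm u), Finset.sum_const, Finset.card_univ]
  have hcard : Fintype.card (Fin (m - 1) → Bool) = 2 ^ (m - 1) := by simp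
  rw [hcard, nsmul_eq_mul]
  push_cast
  rw [mul_comm (((2:ℝ) ^ (m-1))⁻¹) (-1), ← mul_assoc]
  field_simp
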